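/- arXiv:2111.11577 — 4 statements merged into one kernel-verified Lean document; each statement's English description precedes it below -/
import Mathlib

section
/- For all n ≥ 1, log₂ s(n) ≥ (1/n)·C(n, ⌊n/2⌋), where s(n) is the number of sparse paving matroids on ground set Fin n and C(n,k) is the binomial coefficient. In particular, log₂ m(n) ≥ (1/n)·C(n, ⌊n/2⌋), where m(n) is the number of all matroids on Fin n. -/
open Matroid Set Filter

namespace Paper

variable {α β : Type*}

/-- Deletion of a set from a matroid. -/
def Delete (M : Matroid α) (D : Set α) : Matroid α := M ↾ (M.E \ D)

/-- Contraction of a set in a matroid, defined via duality. -/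
def Contract (M : Matroid α) (C : Set α) : Matroid α := (Delete M✶ C)✶

/-- `N` is a minor of `M` if it is obtained from `M` by a contraction followed by a deletion. -/
def IsMinor (N M : Matroid α) : Prop := ∃ C D : Set α, N = Delete (Contract M C) D

/-- `M` is isomorphic to `N`. -/
def Iso (M : Matroid α) (N : Matroid β) : Prop :=
  ∃ (f : α → β) (hf : Set.InjOn f M.E), M.map f hf = N

/-- `M` has a minor isomorphic to `N`. -/
def HasIsoMinor (M : Matroid α) (N : Matroid β) : Prop :=
  ∃ M' : Matroid α, IsMinor M' M ∧ Iso M' N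

/-- A circuit is a minimal dependent set. -/
def Circuit (M : Matroid α) (C : Set α) : Prop := M.Dep C ∧ ∀ D, D ⊂ C → M.Indep D

/-- A hyperplane is a maximal proper flat. -/
def Hyperplane (M : Matroid α) (H : Set α) : Prop :=
  M.IsFlat H ∧ H ≠ M.E ∧ ∀ F, M.IsFlat F → H ⊂ F → F = M.E

/-- A matroid is sparse paving if every nonspanning circuit is a hyperplane. -/
def SparsePaving (M : Matroid α) : Prop :=
  ∀ C, Circuit M C → ¬ M.Spanning C → Hyperplane M C

/-- `M` has rank `r`: some base has exactly `r` elements. -/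
def RankEq (M : Matroid α) (r : ℕ) : Prop := ∃ B, M.IsBase B ∧ B.ncard = r

/-- `N` is (isomorphic to) the rank-3 whirl `𝒲³`: the rank-3 sparse paving matroid on six
elements whose 3-element circuits are exactly the three listed triples. -/
def IsWhirl3 (N : Matroid α) : Prop :=
  ∃ a : Fin 6 → α, Function.Injective a ∧ N.E = Set.range a ∧
    RankEq N 3 ∧ SparsePaving N ∧
    ∀ C : Set α, (Circuit N C ∧ C.ncard = 3) ↔
      (C = {a 0, a 1, a 2} ∨ C = {a 2, a 3, a 4} ∨ C = {a 4, a 5, a 0})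

/-- `N` is (isomorphic to) `M(K₄)`: the rank-3 sparse paving matroid on six elements whose
3-element circuits are exactly the four listed triples. -/
def IsMK4 (N : Matroid α) : Prop :=
  ∃ a : Fin 6 → α, Function.Injective a ∧ N.E = Set.range a ∧
    RankEq N 3 ∧ SparsePaving N ∧
    ∀ C : Set α, (Circuit N C ∧ C.ncard = 3) ↔
      (C = {a 0, a 1, a 2} ∨ C = {a 2, a 3, a 4} ∨ C = {a 4, a 5, a 0} ∨ C = {a 1, a 3, a 5})

/-- `M` has no minor isomorphic to `𝒲³` and no minor isomorphic to `M(K₄)`. -/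
def WFree (M : Matroid α) : Prop :=
  (¬ ∃ N : Matroid α, IsMinor N M ∧ IsWhirl3 N) ∧
  (¬ ∃ N : Matroid α, IsMinor N M ∧ IsMK4 N)

end Paper

/-!
Split the `k`-subsets of `Fin n` into `n` classes according to the sum of their elements
modulo `n`. Two `k`-sets sharing `k - 1` elements have different sums, so each class is a stable
set of the Johnson graph. Any subfamily of a stable family can be made the set of
circuit-hyperplanes of a rank-`k` sparse paving matroid, and distinct subfamilies give distinct
matroids. The largest class has at least `C(n, k) / n` members, so there are at least
`2 ^ (C(n, k) / n)` sparse paving matroids on `Fin n`.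
-/

namespace Paper

section JohnsonStable

variable {α : Type*} {k : ℕ} {𝒜 ℬ : Set (Set α)}

/-- A stable set of the Johnson graph `J(α, k)`: no two members share `k - 1` elements. -/
structure IsJohnsonStable (k : ℕ) (𝒜 : Set (Set α)) : Prop where
  ncard_eq : ∀ X ∈ 𝒜, X.ncard = k
  eq_of_insert_mem : ∀ ⦃I : Set α⦄ ⦃x y : α⦄, x ∉ I → y ∉ I → insert x I ∈ 𝒜 →
    insert y I ∈ 𝒜 → x = y

lemma IsJohnsonStable.mono (h : IsJohnsonStable k ℬ) (h𝒜ℬ : 𝒜 ⊆ ℬ) : IsJohnsonStable k 𝒜 :=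
  ⟨fun X hX ↦ h.ncard_eq X (h𝒜ℬ hX),
    fun _ _ _ hx hy hxI hyI ↦ h.eq_of_insert_mem hx hy (h𝒜ℬ hxI) (h𝒜ℬ hyI)⟩

variable [Finite α]

lemma IsJohnsonStable.indep_aug (h : IsJohnsonStable k 𝒜) {I J : Set α}
    (hJ : J.ncard ≤ k ∧ J ∉ 𝒜) (hIJ : I.ncard < J.ncard) :
    ∃ e ∈ J, e ∉ I ∧ (insert e I).ncard ≤ k ∧ insert e I ∉ 𝒜 := by
  have hins : ∀ e ∉ I, (insert e I).ncard ≤ k := fun e he ↦ by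
    rw [ncard_insert_of_notMem he]; omega
  obtain ⟨e, heJ, heI⟩ := exists_mem_notMem_of_ncard_lt_ncard hIJ
  by_cases he𝒜 : insert e I ∈ 𝒜
  · -- `J ≠ insert e I` has at least as many elements, so it has an element `f` outside it,
    -- and stability forbids `insert f I ∈ 𝒜`.
    have hJe : ¬ J ⊆ insert e I := fun hsub ↦ hJ.2 <| by
      rwa [eq_of_subset_of_ncard_le hsub (by rw [ncard_insert_of_notMem heI]; omega)]
    obtain ⟨f, hfJ, hf⟩ := not_subset.1 hJe
    have hfI : f ∉ I := fun hfI ↦ hf (mem_insert_of_mem e hfI)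
    refine ⟨f, hfJ, hfI, hins f hfI, fun hf𝒜 ↦ hf ?_⟩
    rw [h.eq_of_insert_mem hfI heI hf𝒜 he𝒜]
    exact mem_insert e I
  · exact ⟨e, heJ, heI, hins e heI, he𝒜⟩

/-- The rank-`k` uniform matroid on `α` with the members of `𝒜` turned into circuit-hyperplanes. -/
def IsJohnsonStable.matroid (h : IsJohnsonStable k 𝒜) (hk : k ≠ 0) : Matroid α :=
  (IndepMatroid.ofFinite finite_univ (fun I ↦ I.ncard ≤ k ∧ I ∉ 𝒜)
    ⟨by simp, fun h𝒜 ↦ hk (by simpa using (h.ncard_eq ∅ h𝒜).symm)⟩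
    (fun I J hJ hIJ ↦ ⟨(ncard_le_ncard hIJ).trans hJ.1, fun hI𝒜 ↦ hJ.2 <| by
      rwa [← eq_of_subset_of_ncard_le hIJ (by rw [h.ncard_eq I hI𝒜]; exact hJ.1)]⟩)
    (fun _ _ _ hJ hIJ ↦ h.indep_aug hJ hIJ)
    (fun I _ ↦ subset_univ I)).matroid

variable (h : IsJohnsonStable k 𝒜) (hk : k ≠ 0) {C X : Set α}

@[simp] lemma IsJohnsonStable.matroid_ground : (h.matroid hk).E = univ := rfl

@[simp] lemma IsJohnsonStable.matroid_indep_iff :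
    (h.matroid hk).Indep X ↔ X.ncard ≤ k ∧ X ∉ 𝒜 := Iff.rfl

lemma IsJohnsonStable.matroid_dep_iff : (h.matroid hk).Dep X ↔ k < X.ncard ∨ X ∈ 𝒜 := by
  rw [dep_iff, matroid_indep_iff, matroid_ground, not_and_or, not_le, not_not]
  simp

lemma IsJohnsonStable.eq_of_matroid_eq (hℬ : IsJohnsonStable k ℬ)
    (h𝒜ℬ : h.matroid hk = hℬ.matroid hk) : 𝒜 = ℬ := by
  have hmem : ∀ {𝒞 : Set (Set α)} (h𝒞 : IsJohnsonStable k 𝒞) (X : Set α),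
      X ∈ 𝒞 ↔ X.ncard = k ∧ ¬ (h𝒞.matroid hk).Indep X := fun h𝒞 X ↦ by
    rw [matroid_indep_iff]
    exact ⟨fun hX ↦ ⟨h𝒞.ncard_eq X hX, fun hX' ↦ hX'.2 hX⟩,
      fun ⟨hXk, hX⟩ ↦ by_contra fun hX𝒞 ↦ hX ⟨hXk.le, hX𝒞⟩⟩
  ext X
  rw [hmem h, hmem hℬ, h𝒜ℬ]

lemma IsJohnsonStable.matroid_isBase (hXk : X.ncard = k) (hX : X ∉ 𝒜) :
    (h.matroid hk).IsBase X :=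
  Indep.isBase_of_maximal ⟨hXk.le, hX⟩ fun _ hY hXY ↦
    eq_of_subset_of_ncard_le hXY (hXk ▸ hY.1)

lemma IsJohnsonStable.matroid_isFlat (hC : C ∈ 𝒜) : (h.matroid hk).IsFlat C := by
  refine ⟨fun I Y hIC hIY ↦ ?_, subset_univ C⟩
  have hIC_ne : I ≠ C := fun hIC_eq ↦ (hIC_eq ▸ hIC.indep).2 hC
  have hIk : I.ncard < k := h.ncard_eq C hC ▸ ncard_lt_ncard (hIC.subset.ssubset_of_ne hIC_ne)
  -- For `x ∈ Y \ I`, the set `insert x I` is dependent and has at most `k` elements, so it lies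
  -- in `𝒜`; stability then forces `x = c ∈ C`.
  have hmem : ∀ x ∉ I, (h.matroid hk).Dep (insert x I) → insert x I ∈ 𝒜 := fun x hx hdep ↦
    ((h.matroid_dep_iff hk).1 hdep).resolve_left (by rw [ncard_insert_of_notMem hx]; omega)
  obtain ⟨c, hcC, hcI⟩ := exists_of_ssubset (hIC.subset.ssubset_of_ne hIC_ne)
  have hc𝒜 := hmem c hcI (hIC.insert_dep ⟨hcC, hcI⟩)
  intro x hxY
  by_cases hxI : x ∈ I
  · exact hIC.subset hxI
  rw [h.eq_of_insert_mem hxI hcI (hmem x hxI (hIY.insert_dep ⟨hxY, hxI⟩)) hc𝒜]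
  exact hcC

lemma IsJohnsonStable.matroid_hyperplane (hC : C ∈ 𝒜) (hCs : ¬ (h.matroid hk).Spanning C) :
    Hyperplane (h.matroid hk) C := by
  refine ⟨h.matroid_isFlat hk hC, fun hCE ↦ hCs (hCE ▸ ground_spanning _), fun F hF hCF ↦ ?_⟩
  obtain ⟨e, heF, heC⟩ := exists_of_ssubset hCF
  obtain ⟨c, hcC⟩ := nonempty_of_ncard_ne_zero (h.ncard_eq C hC ▸ hk)
  -- Exchanging `c` for `e` in `C` gives a `k`-set outside `𝒜`, hence a base inside `F`.
  have hcC' : c ∉ C \ {c} := fun hc ↦ hc.2 rfl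
  have heC' : e ∉ C \ {c} := fun he ↦ heC he.1
  have hB𝒜 : insert e (C \ {c}) ∉ 𝒜 := fun he𝒜 ↦ heC <|
    h.eq_of_insert_mem heC' hcC' he𝒜 (by rwa [insert_sdiff_singleton, insert_eq_of_mem hcC]) ▸ hcC
  have hB := h.matroid_isBase hk (by
    rw [ncard_insert_of_notMem heC', ncard_sdiff_singleton_of_mem hcC, h.ncard_eq C hC]; omega) hB𝒜
  have hFs : (h.matroid hk).Spanning F :=
    hB.spanning.superset (insert_subset heF (sdiff_subset.trans hCF.subset)) (subset_univ F)
  rw [← hF.closure, hFs.closure_eq, matroid_ground]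

lemma IsJohnsonStable.matroid_spanning_of_circuit (hC : Circuit (h.matroid hk) C)
    (hCk : k < C.ncard) : (h.matroid hk).Spanning C := by
  obtain ⟨c, hcC⟩ := nonempty_of_ncard_ne_zero (s := C) (by omega)
  -- `C \ {c}` is independent by minimality of `C`, so it has exactly `k` elements.
  have hind := hC.2 (C \ {c}) (sdiff_singleton_ssubset.2 hcC)
  have hB := h.matroid_isBase hk (by
    have := hind.1; rw [ncard_sdiff_singleton_of_mem hcC] at this ⊢; omega) hind.2
  exact hB.spanning.superset sdiff_subset (subset_univ C)

lemma IsJohnsonStable.matroid_sparsePaving : SparsePaving (h.matroid hk) := fun _ hC hCs ↦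
  ((h.matroid_dep_iff hk).1 hC.1).elim
    (fun hCk ↦ (hCs (h.matroid_spanning_of_circuit hk hC hCk)).elim)
    (fun hC𝒜 ↦ h.matroid_hyperplane hk hC𝒜 hCs)

end JohnsonStable

section Counting

variable {α : Type*} [Finite α]

instance : Finite (Matroid α) :=
  Finite.of_injective (fun M : Matroid α ↦ (M.E, M.Indep)) fun M M' hM ↦ by
    simp only [Prod.mk.injEq] at hM
    exact ext_indep hM.1 fun I _ ↦ by rw [hM.2]

lemma two_pow_ncard_le_ncard_sparsePaving {k : ℕ} {𝒜 : Set (Set α)}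
    (h : IsJohnsonStable k 𝒜) (hk : k ≠ 0) :
    2 ^ 𝒜.ncard ≤ {M : Matroid α | M.E = univ ∧ SparsePaving M}.ncard := by
  let Φ : 𝒫 𝒜 → {M : Matroid α | M.E = univ ∧ SparsePaving M} := fun ℬ ↦
    ⟨(h.mono ℬ.2).matroid hk, rfl, (h.mono ℬ.2).matroid_sparsePaving hk⟩
  have hΦ : Function.Injective Φ := fun ℬ ℬ' hΦℬ ↦
    Subtype.ext <| (h.mono ℬ.2).eq_of_matroid_eq hk (h.mono ℬ'.2) (congrArg Subtype.val hΦℬ)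
  rw [← ncard_powerset 𝒜, ← Nat.card_coe_set_eq, ← Nat.card_coe_set_eq]
  exact Nat.card_le_card_of_injective Φ hΦ

end Counting

section SumClass

variable {n : ℕ}

def sumClass (k : ℕ) (t : ZMod n) : Set (Set (Fin n)) :=
  {X | X.ncard = k ∧ ∑ᶠ i ∈ X, ((i : ℕ) : ZMod n) = t}

lemma isJohnsonStable_sumClass (k : ℕ) (t : ZMod n) : IsJohnsonStable k (sumClass k t) := by
  refine ⟨fun X hX ↦ hX.1, fun I x y hx hy hxI hyI ↦ ?_⟩
  have hxy : ((x : ℕ) : ZMod n) = (y : ℕ) := by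
    have := hxI.2.trans hyI.2.symm
    rwa [finsum_mem_insert _ hx (toFinite I), finsum_mem_insert _ hy (toFinite I),
      add_left_inj] at this
  have : NeZero n := ⟨x.pos.ne'⟩
  exact Fin.ext <| by
    simpa only [ZMod.val_natCast_of_lt x.isLt, ZMod.val_natCast_of_lt y.isLt] using
      congrArg ZMod.val hxy

lemma exists_choose_div_le_ncard_sumClass [NeZero n] (k : ℕ) :
    ∃ t : ZMod n, (n.choose k : ℝ) / n ≤ (sumClass k t).ncard := by
  have hcard : (Finset.univ : Finset (ZMod n)).card • ((n.choose k : ℝ) / n) ≤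
      (Finset.powersetCard k (Finset.univ : Finset (Fin n))).card := by
    rw [Finset.card_univ, ZMod.card, nsmul_eq_mul, mul_div_cancel₀ _ (NeZero.ne (n : ℝ)),
      Finset.card_powersetCard, Finset.card_univ, Fintype.card_fin]
  obtain ⟨t, -, ht⟩ := Finset.exists_le_card_fiber_of_nsmul_le_card_of_maps_to
    (f := fun F : Finset (Fin n) ↦ ∑ i ∈ F, ((i : ℕ) : ZMod n))
    (fun F _ ↦ Finset.mem_univ _) Finset.univ_nonempty hcard
  refine ⟨t, ht.trans ?_⟩
  rw [← ncard_coe_finset, ← ncard_image_of_injective _ Finset.coe_injective]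
  refine Nat.cast_le.2 (ncard_le_ncard ?_)
  rintro _ ⟨F, hF, rfl⟩
  simp only [Finset.coe_filter, mem_ofPred_eq, Finset.mem_powersetCard] at hF
  exact ⟨by rw [ncard_coe_finset, hF.1.2], by rw [finsum_mem_coe_finset, hF.2]⟩

end SumClass

lemma le_logb_two_of_two_pow_le {x : ℝ} {m s : ℕ} (hxm : x ≤ m) (hs : 2 ^ m ≤ s) :
    x ≤ Real.logb 2 s := by
  rw [Real.le_logb_iff_rpow_le one_lt_two (by exact_mod_cast (Nat.two_pow_pos m).trans_le hs)]
  calc (2 : ℝ) ^ x ≤ 2 ^ (m : ℝ) := Real.rpow_le_rpow_of_exponent_le one_le_two hxm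
    _ ≤ s := by rw [Real.rpow_natCast]; exact_mod_cast hs

/-- **Lemma (Graham–Sloane lower bound).** For all `n ≥ 1`,
`log₂ s(n) ≥ (1/n)·C(n,⌊n/2⌋)` and `log₂ m(n) ≥ (1/n)·C(n,⌊n/2⌋)`. -/
theorem graham_sloane_lower_bound (n : ℕ) (hn : 1 ≤ n) :
    ((1 : ℝ) / n) * (n.choose (n / 2)) ≤
      Real.logb 2 (Set.ncard {M : Matroid (Fin n) | M.E = Set.univ ∧ SparsePaving M}) ∧
    ((1 : ℝ) / n) * (n.choose (n / 2)) ≤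
      Real.logb 2 (Set.ncard {M : Matroid (Fin n) | M.E = Set.univ}) := by
  have : NeZero n := ⟨by omega⟩
  -- `k = ⌈n/2⌉` rather than `⌊n/2⌋`, which vanishes for `n = 1`.
  have hk : (n + 1) / 2 ≠ 0 := by omega
  rw [one_div_mul_eq_div, Nat.choose_symm_of_eq_add (by omega : n = n / 2 + (n + 1) / 2)]
  obtain ⟨t, ht⟩ := exists_choose_div_le_ncard_sumClass (n := n) ((n + 1) / 2)
  have hsp := two_pow_ncard_le_ncard_sparsePaving (isJohnsonStable_sumClass _ t) hk
  have hall := hsp.trans <| ncard_le_ncard (fun M (hM : M.E = univ ∧ _) ↦ hM.1) (toFinite _)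
  exact ⟨le_logb_two_of_two_pow_le ht hsp, le_logb_two_of_two_pow_le ht hall⟩

end Paper
end

section
/- Let n ≥ 4 and let M be a rank-3 sparse paving matroid on Fin n with family C of circuit-hyperplanes. Then M has no minor isomorphic to 𝒲³ and no minor isomorphic to M(K₄) if and only if every 6-element subset of Fin n contains at most 2 members of C. -/
open Matroid Set Filter

/-!
In a rank-3 sparse paving matroid every 3-element circuit is a hyperplane, hence a flat, so two
distinct 3-circuits share at most one element. Three of them inside a 6-set must then form a
triangle `{a₀, a₁, a₂}, {a₂, a₃, a₄}, {a₄, a₅, a₀}`, and `{a₁, a₃, a₅}` is the only other triple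
meeting each side in at most one point. Restricting to these six points (a spanning set, as it
strictly contains a hyperplane) gives `𝒲³` or `M(K₄)`, depending on whether `{a₁, a₃, a₅}` is a
circuit. Conversely, a minor of the same rank is a restriction, since contracting a basis `I` of
the contracted set lowers the rank by `|I|`; so a `𝒲³`- or `M(K₄)`-minor exhibits three
3-circuits of `M` in its 6-element ground set.
-/

namespace Matroid

variable {α : Type*} {M : Matroid α} {C F : Set α}

lemma IsCircuit.subset_of_isFlat (hC : M.IsCircuit C) (hF : M.IsFlat F)
    (hCF : (C \ F).ncard ≤ 1) (hfin : C.Finite) : C ⊆ F := by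
  by_contra hsub
  obtain ⟨e, heC, heF⟩ := not_subset.1 hsub
  have hCe : C \ {e} ⊆ F := fun y ⟨hyC, hye⟩ ↦ by_contra fun hyF ↦
    hye ((ncard_le_one hfin.sdiff).1 hCF y ⟨hyC, hyF⟩ e ⟨heC, heF⟩)
  exact heF <| hF.closure ▸ M.closure_subset_closure hCe (hC.mem_closure_sdiff_singleton_of_mem heC)

end Matroid

namespace Paper

variable {α : Type*} {M N : Matroid α} {r : ℕ} {B C C' H I S X : Set α}

section Combinatorics

lemma injective_of_ncard_range {k : ℕ} {a : Fin k → α} (ha : (range a).ncard = k) :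
    Function.Injective a := by
  have : (a '' univ).ncard = (univ : Set (Fin k)).ncard := by
    rwa [ncard_univ, Nat.card_eq_fintype_card, Fintype.card_fin, image_univ]
  exact injOn_univ.1 ((ncard_image_iff (toFinite _)).1 this)

lemma exists_eq_triple_of_ncard_eq_three {T : Set α} {p q : α} (hT : T.ncard = 3) (hp : p ∈ T)
    (hq : q ∈ T) (hpq : p ≠ q) : ∃ u, T = {p, u, q} := by
  obtain ⟨u, hu⟩ := ncard_eq_one.1 <| show (T \ {p, q}).ncard = 1 by
    rw [ncard_sdiff (pair_subset hp hq), hT, ncard_pair hpq]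
  refine ⟨u, ?_⟩
  rw [← sdiff_union_of_subset (pair_subset hp hq), hu, singleton_union, insert_comm]

lemma ncard_triple {a : Fin 6 → α} (ha : Function.Injective a) (i j k : Fin 6)
    (hij : i ≠ j := by decide) (hik : i ≠ k := by decide) (hjk : j ≠ k := by decide) :
    ({a i, a j, a k} : Set α).ncard = 3 :=
  ncard_eq_three.2 ⟨_, _, _, ha.ne hij, ha.ne hik, ha.ne hjk, rfl⟩

lemma eq_of_ncard_inter_triangle_le_one {a : Fin 6 → α} (ha : Function.Injective a) {T : Set α}
    (hT : T ⊆ range a) (h3 : T.ncard = 3) (h₁ : (T ∩ {a 0, a 1, a 2}).ncard ≤ 1)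
    (h₂ : (T ∩ {a 2, a 3, a 4}).ncard ≤ 1) (h₃ : (T ∩ {a 4, a 5, a 0}).ncard ≤ 1) :
    T = {a 1, a 3, a 5} := by
  obtain ⟨X, rfl⟩ : ∃ X : Finset (Fin 6), T = a '' X :=
    ⟨(toFinite (a ⁻¹' T)).toFinset, by rw [Finite.coe_toFinset, image_preimage_eq_of_subset hT]⟩
  have hinter (Y : Finset (Fin 6)) : (a '' X ∩ a '' Y).ncard = (X ∩ Y).card := by
    rw [← image_inter ha, ncard_image_of_injective _ ha, ← Finset.coe_inter, ncard_coe_finset]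
  have htriple (i j k : Fin 6) :
      ({a i, a j, a k} : Set α) = a '' ↑({i, j, k} : Finset (Fin 6)) := by
    simp [image_insert_eq]
  have hfin : ∀ Y : Finset (Fin 6), Y.card = 3 → (Y ∩ {0, 1, 2}).card ≤ 1 →
      (Y ∩ {2, 3, 4}).card ≤ 1 → (Y ∩ {4, 5, 0}).card ≤ 1 → Y = {1, 3, 5} := by
    decide
  rw [htriple, hinter] at h₁ h₂ h₃
  rw [ncard_image_of_injective _ ha, ncard_coe_finset] at h3
  rw [htriple, hfin X h3 h₁ h₂ h₃]

variable [Finite α]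

lemma ncard_union_union_add_ncard_inter (A B C : Set α) :
    (A ∪ B ∪ C).ncard + (A ∩ B).ncard + (A ∩ C).ncard + (B ∩ C).ncard =
      A.ncard + B.ncard + C.ncard + (A ∩ B ∩ C).ncard := by
  have hAB := ncard_union_add_ncard_inter A B
  have hABC := ncard_union_add_ncard_inter (A ∪ B) C
  have hAC_BC := ncard_union_add_ncard_inter (A ∩ C) (B ∩ C)
  rw [union_inter_distrib_right] at hABC
  rw [inter_inter_inter_comm, inter_self] at hAC_BC
  omega

lemma exists_triangle_of_ncard_inter_le_one {S T₁ T₂ T₃ : Set α} (hS : S.ncard = 6)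
    (h₁ : T₁ ⊆ S) (h₂ : T₂ ⊆ S) (h₃ : T₃ ⊆ S)
    (c₁ : T₁.ncard = 3) (c₂ : T₂.ncard = 3) (c₃ : T₃.ncard = 3)
    (i₁₂ : (T₁ ∩ T₂).ncard ≤ 1) (i₁₃ : (T₁ ∩ T₃).ncard ≤ 1) (i₂₃ : (T₂ ∩ T₃).ncard ≤ 1) :
    ∃ a : Fin 6 → α, Function.Injective a ∧
      T₁ = {a 0, a 1, a 2} ∧ T₂ = {a 2, a 3, a 4} ∧ T₃ = {a 4, a 5, a 0} := by
  have hU : (T₁ ∪ T₂ ∪ T₃).ncard ≤ 6 :=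
    hS ▸ ncard_le_ncard (union_subset (union_subset h₁ h₂) h₃)
  have hIE := ncard_union_union_add_ncard_inter T₁ T₂ T₃
  obtain ⟨x, hx⟩ := ncard_eq_one.1 (show (T₁ ∩ T₂).ncard = 1 by omega)
  obtain ⟨y, hy⟩ := ncard_eq_one.1 (show (T₂ ∩ T₃).ncard = 1 by omega)
  obtain ⟨z, hz⟩ := ncard_eq_one.1 (show (T₁ ∩ T₃).ncard = 1 by omega)
  have h₀ : T₁ ∩ T₂ ∩ T₃ = ∅ := (ncard_eq_zero (toFinite _)).1 (by omega)
  have hx' : x ∈ T₁ ∩ T₂ := hx ▸ rfl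
  have hy' : y ∈ T₂ ∩ T₃ := hy ▸ rfl
  have hz' : z ∈ T₁ ∩ T₃ := hz ▸ rfl
  have hzx : z ≠ x := fun h ↦ eq_empty_iff_forall_notMem.1 h₀ x ⟨hx', h ▸ hz'.2⟩
  have hxy : x ≠ y := fun h ↦ eq_empty_iff_forall_notMem.1 h₀ y ⟨h ▸ hx', hy'.2⟩
  have hyz : y ≠ z := fun h ↦ eq_empty_iff_forall_notMem.1 h₀ z ⟨⟨hz'.1, h ▸ hy'.1⟩, hz'.2⟩
  obtain ⟨u, rfl⟩ := exists_eq_triple_of_ncard_eq_three c₁ hz'.1 hx'.1 hzx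
  obtain ⟨v, rfl⟩ := exists_eq_triple_of_ncard_eq_three c₂ hx'.2 hy'.1 hxy
  obtain ⟨w, rfl⟩ := exists_eq_triple_of_ncard_eq_three c₃ hy'.2 hz'.2 hyz
  refine ⟨![z, u, x, v, y, w], injective_of_ncard_range ?_, rfl, rfl, rfl⟩
  have hrange : range ![z, u, x, v, y, w] = {z, u, x} ∪ {x, v, y} ∪ {y, w, z} := by
    ext t
    simp only [Matrix.range_cons, Matrix.range_empty, union_empty, mem_union, mem_insert_iff,
      mem_singleton_iff]
    tauto
  rw [hrange]
  omega

end Combinatorics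

lemma circuit_iff_isCircuit : Circuit M C ↔ M.IsCircuit C :=
  isCircuit_iff_forall_ssubset.symm

lemma isMinor_restrict (hS : S ⊆ M.E) : IsMinor (M ↾ S) M :=
  ⟨∅, M.E \ S, by
    change M ↾ S = M ／ ∅ ＼ (M.E \ S)
    rw [contract_empty, delete_compl hS]⟩

lemma Hyperplane.closure_insert_eq (hH : Hyperplane M H) {x : α} (hx : x ∈ M.E) (hxH : x ∉ H) :
    M.closure (insert x H) = M.E :=
  hH.2.2 _ (M.isFlat_closure _) <|
    (ssubset_insert hxH).trans_subset (M.subset_closure _ (insert_subset hx hH.1.subset_ground))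

lemma Hyperplane.spanning_of_ssubset (hH : Hyperplane M H) (hHS : H ⊂ S) (hS : S ⊆ M.E) :
    M.Spanning S := by
  obtain ⟨x, hxS, hxH⟩ := exists_of_ssubset hHS
  rw [spanning_iff_closure_eq hS]
  refine (M.closure_subset_ground S).antisymm ?_
  rw [← hH.closure_insert_eq (hS hxS) hxH]
  exact M.closure_subset_closure (insert_subset hxS hHS.subset)

lemma Hyperplane.restrict_of_spanning (hH : Hyperplane M H) (hS : M.Spanning S) (hHS : H ⊆ S) :
    Hyperplane (M ↾ S) H := by
  have hSE : S ⊆ M.E := hS.subset_ground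
  have hcl : ∀ X ⊆ S, (M ↾ S).closure X = M.closure X ∩ S :=
    fun X hX ↦ restrict_closure_eq M hX hSE
  refine ⟨isFlat_iff_closure_eq.2 ?_, fun hHS' ↦ hH.2.1 ?_, fun F hF hHF ↦ ?_⟩
  · rw [hcl H hHS, hH.1.closure, inter_eq_left.2 hHS]
  · rw [← hS.closure_eq, ← hH.1.closure, restrict_ground_eq.symm.trans hHS'.symm]
  · have hFS : F ⊆ S := hF.subset_ground
    rw [restrict_ground_eq, ← hF.closure, hcl F hFS,
      hH.2.2 _ (M.isFlat_closure F) (hHF.trans_subset (M.subset_closure F)), inter_eq_right.2 hSE]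

lemma SparsePaving.restrict_of_spanning (hsp : SparsePaving M) (hS : M.Spanning S) :
    SparsePaving (M ↾ S) := by
  intro C hC hns
  rw [circuit_iff_isCircuit, restrict_isCircuit_iff hS.subset_ground] at hC
  refine (hsp C (circuit_iff_isCircuit.2 hC.1) fun hCsp ↦ hns ?_).restrict_of_spanning hS hC.2
  rw [restrict_spanning_iff hC.2 hS.subset_ground, hCsp.closure_eq]
  exact hS.subset_ground

lemma RankEq.ncard_eq_of_isBase (hr : RankEq M r) (hB : M.IsBase B) : B.ncard = r := by
  obtain ⟨B₀, hB₀, rfl⟩ := hr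
  exact hB.ncard_eq_ncard_of_isBase hB₀

lemma RankEq.restrict_of_spanning (hr : RankEq M r) (hS : M.Spanning S) : RankEq (M ↾ S) r := by
  obtain ⟨B, hB, hBS⟩ := hS.exists_isBase_subset
  exact ⟨B, hS.isBase_restrict_iff.2 ⟨hB, hBS⟩, hr.ncard_eq_of_isBase hB⟩

section Finite

variable [Finite α]

lemma RankEq.ncard_le_of_indep (hr : RankEq M r) (hI : M.Indep I) : I.ncard ≤ r := by
  obtain ⟨B, hB, hIB⟩ := hI.exists_isBase_superset
  exact hr.ncard_eq_of_isBase hB ▸ ncard_le_ncard hIB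

lemma RankEq.indep_of_spanning (hr : RankEq M r) (hX : M.Spanning X) (hXr : X.ncard ≤ r) :
    M.Indep X := by
  obtain ⟨B, hB, hBX⟩ := hX.exists_isBase_subset
  rw [← eq_of_subset_of_ncard_le hBX (hXr.trans (hr.ncard_eq_of_isBase hB).ge)]
  exact hB.indep

lemma RankEq.not_spanning_of_isCircuit (hr : RankEq M r) (hC : M.IsCircuit C)
    (hCr : C.ncard ≤ r) : ¬ M.Spanning C :=
  fun hCsp ↦ hC.dep.not_indep (hr.indep_of_spanning hCsp hCr)

lemma IsMinor.isRestriction_of_rankEq (hNM : IsMinor N M) (hM : RankEq M r) (hN : RankEq N r) :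
    N ≤r M := by
  obtain ⟨C, D, rfl⟩ := hNM
  change M ／ C ＼ D ≤r M
  obtain ⟨I, hI⟩ := M.exists_isBasis' C
  obtain ⟨B, hB, hBr⟩ := hN
  have hBI : (M ／ I).Indep B := by
    have hBC : (M ／ C).Indep B := Indep.of_delete (D := D) hB.indep
    rw [hI.contract_eq_contract_delete] at hBC
    exact hBC.of_delete
  obtain ⟨hdisj, hBIind⟩ := hI.indep.contract_indep_iff.1 hBI
  have hI0 : I = ∅ := by
    have := hM.ncard_le_of_indep hBIind
    rw [ncard_union_eq hdisj] at this
    exact (ncard_eq_zero (toFinite I)).1 (by omega)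
  rw [hI.contract_eq_contract_delete, hI0, contract_empty, sdiff_empty, delete_delete]
  exact delete_isRestriction M _

lemma hyperplane_of_isCircuit_of_ncard_eq_three (hr : RankEq M 3)
    (hsp : SparsePaving M) (hC : M.IsCircuit C) (h3 : C.ncard = 3) : Hyperplane M C :=
  hsp C (circuit_iff_isCircuit.2 hC) (hr.not_spanning_of_isCircuit hC h3.le)

lemma ncard_inter_le_one_of_isCircuit (hr : RankEq M 3) (hsp : SparsePaving M)
    (hC : M.IsCircuit C) (hC' : M.IsCircuit C') (h3 : C.ncard = 3) (h3' : C'.ncard = 3)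
    (hne : C ≠ C') : (C ∩ C').ncard ≤ 1 := by
  by_contra! h
  have hdiff := ncard_inter_add_ncard_sdiff_eq_ncard C' C
  rw [inter_comm] at hdiff
  have hsub : C' ⊆ C := hC'.subset_of_isFlat
    (hyperplane_of_isCircuit_of_ncard_eq_three hr hsp hC h3).1 (by omega) (toFinite _)
  exact hne (hC'.eq_of_subset_isCircuit hC hsub).symm

end Finite

section Triangle

variable [Finite α] {a : Fin 6 → α}

lemma circuit_restrict_range_iff (hr : RankEq M 3) (hsp : SparsePaving M)
    (ha : Function.Injective a) (hRE : range a ⊆ M.E) (h₁ : M.IsCircuit {a 0, a 1, a 2})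
    (h₂ : M.IsCircuit {a 2, a 3, a 4}) (h₃ : M.IsCircuit {a 4, a 5, a 0}) {c : Set α} :
    Circuit (M ↾ range a) c ∧ c.ncard = 3 ↔
      c = {a 0, a 1, a 2} ∨ c = {a 2, a 3, a 4} ∨ c = {a 4, a 5, a 0} ∨
        (c = {a 1, a 3, a 5} ∧ M.IsCircuit {a 1, a 3, a 5}) := by
  have hsub (i j k : Fin 6) : ({a i, a j, a k} : Set α) ⊆ range a := by
    rintro _ (rfl | rfl | rfl) <;> exact mem_range_self _
  rw [circuit_iff_isCircuit, restrict_isCircuit_iff hRE]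
  constructor
  · rintro ⟨⟨hc, hcR⟩, h3⟩
    by_contra! hne
    obtain ⟨hne₁, hne₂, hne₃, hne₄⟩ := hne
    have hinter {T : Set α} (hT : M.IsCircuit T) (hT3 : T.ncard = 3) (hcT : c ≠ T) :=
      ncard_inter_le_one_of_isCircuit hr hsp hc hT h3 hT3 hcT
    have h₄ := eq_of_ncard_inter_triangle_le_one ha hcR h3
      (hinter h₁ (ncard_triple ha 0 1 2) hne₁)
      (hinter h₂ (ncard_triple ha 2 3 4) hne₂)
      (hinter h₃ (ncard_triple ha 4 5 0) hne₃)
    exact hne₄ h₄ (h₄ ▸ hc)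
  · rintro (rfl | rfl | rfl | ⟨rfl, h₄⟩)
    exacts [⟨⟨h₁, hsub 0 1 2⟩, ncard_triple ha 0 1 2⟩,
      ⟨⟨h₂, hsub 2 3 4⟩, ncard_triple ha 2 3 4⟩,
      ⟨⟨h₃, hsub 4 5 0⟩, ncard_triple ha 4 5 0⟩,
      ⟨⟨h₄, hsub 1 3 5⟩, ncard_triple ha 1 3 5⟩]

lemma not_wFree_of_isCircuit_triangle (hr : RankEq M 3) (hsp : SparsePaving M)
    (ha : Function.Injective a) (h₁ : M.IsCircuit {a 0, a 1, a 2})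
    (h₂ : M.IsCircuit {a 2, a 3, a 4}) (h₃ : M.IsCircuit {a 4, a 5, a 0}) : ¬ WFree M := by
  have hRE : range a ⊆ M.E := by
    rintro _ ⟨i, rfl⟩
    fin_cases i
    exacts [h₁.subset_ground (by simp), h₁.subset_ground (by simp), h₁.subset_ground (by simp),
      h₂.subset_ground (by simp), h₂.subset_ground (by simp), h₃.subset_ground (by simp)]
  have hH := hyperplane_of_isCircuit_of_ncard_eq_three hr hsp h₁ (ncard_triple ha 0 1 2)
  have hspan : M.Spanning (range a) := hH.spanning_of_ssubset
    (ssubset_of_subset_not_subset (by rintro _ (rfl | rfl | rfl) <;> exact mem_range_self _)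
      fun h ↦ by simpa [ha.eq_iff] using h (mem_range_self 3)) hRE
  have hrR := hr.restrict_of_spanning hspan
  have hspR := hsp.restrict_of_spanning hspan
  rintro ⟨hW, hK⟩
  by_cases h₄ : M.IsCircuit {a 1, a 3, a 5}
  · refine hK ⟨_, isMinor_restrict hRE, a, ha, rfl, hrR, hspR, fun c ↦ ?_⟩
    simp only [circuit_restrict_range_iff hr hsp ha hRE h₁ h₂ h₃, h₄, and_true]
  · refine hW ⟨_, isMinor_restrict hRE, a, ha, rfl, hrR, hspR, fun c ↦ ?_⟩
    simp only [circuit_restrict_range_iff hr hsp ha hRE h₁ h₂ h₃, h₄, and_false, or_false]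

lemma three_le_ncard_of_triangle_minor (hr : RankEq M 3) (hNM : IsMinor N M) (hN : RankEq N 3)
    (ha : Function.Injective a) (hNE : N.E = range a) (h₁ : Circuit N {a 0, a 1, a 2})
    (h₂ : Circuit N {a 2, a 3, a 4}) (h₃ : Circuit N {a 4, a 5, a 0}) :
    3 ≤ {c : Set α | Circuit M c ∧ c.ncard = 3 ∧ c ⊆ range a}.ncard := by
  have hres := hNM.isRestriction_of_rankEq hr hN
  have hcirc {c : Set α} (hc : Circuit N c) : Circuit M c ∧ c ⊆ range a := by
    rw [circuit_iff_isCircuit, ← hres.eq_restrict, restrict_isCircuit_iff hres.subset, hNE] at hc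
    exact ⟨circuit_iff_isCircuit.2 hc.1, hc.2⟩
  have hT : ({{a 0, a 1, a 2}, {a 2, a 3, a 4}, {a 4, a 5, a 0}} : Set (Set α)).ncard = 3 :=
    ncard_eq_three.2 ⟨{a 0, a 1, a 2}, {a 2, a 3, a 4}, {a 4, a 5, a 0},
      ne_of_mem_of_not_mem' (a := a 0) (by simp) (by simp [ha.eq_iff]),
      ne_of_mem_of_not_mem' (a := a 1) (by simp) (by simp [ha.eq_iff]),
      ne_of_mem_of_not_mem' (a := a 3) (by simp) (by simp [ha.eq_iff]), rfl⟩
  refine hT.ge.trans (ncard_le_ncard ?_)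
  rintro _ (rfl | rfl | rfl)
  exacts [⟨(hcirc h₁).1, ncard_triple ha 0 1 2, (hcirc h₁).2⟩,
    ⟨(hcirc h₂).1, ncard_triple ha 2 3 4, (hcirc h₂).2⟩,
    ⟨(hcirc h₃).1, ncard_triple ha 4 5 0, (hcirc h₃).2⟩]

end Triangle

lemma exists_isCircuit_triangle [Finite α] (hr : RankEq M 3) (hsp : SparsePaving M)
    (hS : S.ncard = 6) (h : 2 < {c : Set α | Circuit M c ∧ c.ncard = 3 ∧ c ⊆ S}.ncard) :
    ∃ a : Fin 6 → α, Function.Injective a ∧ M.IsCircuit {a 0, a 1, a 2} ∧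
      M.IsCircuit {a 2, a 3, a 4} ∧ M.IsCircuit {a 4, a 5, a 0} := by
  obtain ⟨𝒯, h𝒯, h𝒯3⟩ := exists_subset_card_eq h
  obtain ⟨T₁, T₂, T₃, h₁₂, h₁₃, h₂₃, rfl⟩ := ncard_eq_three.1 h𝒯3
  obtain ⟨hC₁, c₁, s₁⟩ := h𝒯 (mem_insert T₁ _)
  obtain ⟨hC₂, c₂, s₂⟩ := h𝒯 (mem_insert_of_mem _ (mem_insert T₂ _))
  obtain ⟨hC₃, c₃, s₃⟩ := h𝒯 (mem_insert_of_mem _ (mem_insert_of_mem _ rfl))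
  rw [circuit_iff_isCircuit] at hC₁ hC₂ hC₃
  obtain ⟨a, ha, rfl, rfl, rfl⟩ := exists_triangle_of_ncard_inter_le_one hS s₁ s₂ s₃ c₁ c₂ c₃
    (ncard_inter_le_one_of_isCircuit hr hsp hC₁ hC₂ c₁ c₂ h₁₂)
    (ncard_inter_le_one_of_isCircuit hr hsp hC₁ hC₃ c₁ c₃ h₁₃)
    (ncard_inter_le_one_of_isCircuit hr hsp hC₂ hC₃ c₂ c₃ h₂₃)
  exact ⟨a, ha, hC₁, hC₂, hC₃⟩

theorem rank3_sparse_paving_WFree_iff_RuzsaSzemeredi_general (n : ℕ)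
    (M : Matroid (Fin n)) (hrk : RankEq M 3) (hsp : SparsePaving M) :
    WFree M ↔
      ∀ S : Set (Fin n), S.ncard = 6 →
        {c : Set (Fin n) | Circuit M c ∧ c.ncard = 3 ∧ c ⊆ S}.ncard ≤ 2 := by
  constructor
  · intro hW S hS
    by_contra! h
    obtain ⟨a, ha, h₁, h₂, h₃⟩ := exists_isCircuit_triangle hrk hsp hS h
    exact not_wFree_of_isCircuit_triangle hrk hsp ha h₁ h₂ h₃ hW
  · intro hle
    refine ⟨?_, ?_⟩ <;> rintro ⟨N, hNM, a, ha, hNE, hN, -, hcirc⟩ <;>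
    · have h3 := three_le_ncard_of_triangle_minor hrk hNM hN ha hNE ((hcirc _).2 (by simp)).1
        ((hcirc _).2 (by simp)).1 ((hcirc _).2 (by simp)).1
      have h2 := hle (range a) <| by
        rw [ncard_range_of_injective ha, Nat.card_eq_fintype_card, Fintype.card_fin]
      omega

/-- A rank-3 sparse paving matroid on `Fin n` (`n ≥ 4`) has no `𝒲³`- and no `M(K₄)`-minor iff
every 6-element subset of the ground set contains at most two of its circuit-hyperplanes
(3-element circuits). -/
theorem rank3_sparse_paving_WFree_iff_RuzsaSzemeredi (n : ℕ) (hn : 4 ≤ n)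
    (M : Matroid (Fin n)) (hE : M.E = Set.univ) (hrk : RankEq M 3) (hsp : SparsePaving M) :
    WFree M ↔
      ∀ S : Set (Fin n), S.ncard = 6 →
        {c : Set (Fin n) | Circuit M c ∧ c.ncard = 3 ∧ c ⊆ S}.ncard ≤ 2 :=
  rank3_sparse_paving_WFree_iff_RuzsaSzemeredi_general n M hrk hsp

end Paper
end

section
/- Ruzsa–Szemerédi (6,3)-theorem: rs(n) = o(n²), i.e. rs(n)/n² → 0 as n → ∞, where rs(n) is the maximum number of edges of a Ruzsa–Szemerédi hypergraph on n vertices. -/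
/-!
Join two vertices when some edge contains both. In a Ruzsa–Szemerédi hypergraph every triangle of
this shadow graph is an edge, so the shadow is a locally linear graph with as many triangles as the
hypergraph has edges. A graph with `ε n²` edge-disjoint triangles is `ε`-far from triangle-free,
so by the triangle removal lemma it has `≳ n³` triangles; but edge-disjointness allows at most
`n²`, so this is impossible once `n` is large.
-/

open Filter

namespace Paper

variable {V W : Type*} [DecidableEq V] [DecidableEq W]

/-- `E` is (the edge family of) a linear 3-uniform hypergraph: every edge has 3 vertices and
two distinct edges meet in at most one vertex. -/
def Linear3 (E : Set (Finset V)) : Prop :=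
  (∀ e ∈ E, e.card = 3) ∧ ∀ e ∈ E, ∀ f ∈ E, e ≠ f → (e ∩ f).card ≤ 1

/-- A Ruzsa–Szemerédi hypergraph: a linear 3-uniform hypergraph in which every 6 vertices
span at most 2 edges. -/
def IsRS (E : Set (Finset V)) : Prop :=
  Linear3 E ∧ ∀ S : Finset V, S.card = 6 → {e ∈ E | e ⊆ S}.ncard ≤ 2

/-- `E` contains a linear 3-cycle: edges `{a,b,c}, {c,d,e}, {e,f,a}` on six distinct
vertices. -/
def HasLinear3Cycle (E : Set (Finset V)) : Prop :=
  ∃ a b c d e f : V, ({a, b, c, d, e, f} : Finset V).card = 6 ∧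
    ({a, b, c} : Finset V) ∈ E ∧ ({c, d, e} : Finset V) ∈ E ∧ ({e, f, a} : Finset V) ∈ E

/-- `E` contains a subgraph copy of the hypergraph with edge family `G`. -/
def HasCopy (G : Set (Finset W)) (E : Set (Finset V)) : Prop :=
  ∃ φ : W → V, Function.Injective φ ∧ ∀ e ∈ G, e.image φ ∈ E

/-- `E` contains an induced copy of the hypergraph with edge family `G`. -/
def HasInducedCopy (G : Set (Finset W)) (E : Set (Finset V)) : Prop :=
  ∃ φ : W → V, Function.Injective φ ∧ (∀ e ∈ G, e.image φ ∈ E) ∧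
    ∀ f ∈ E, (f : Set V) ⊆ Set.range φ → ∃ e ∈ G, f = e.image φ

/-- The linear 3-cycle `𝒲³` (as a 3-uniform hypergraph on six vertices). -/
def cycleHG : Set (Finset (Fin 6)) := {{0, 1, 2}, {2, 3, 4}, {4, 5, 0}}

/-- The Fano hypergraph `F₇`. -/
def fanoHG : Set (Finset (Fin 7)) :=
  {{0, 1, 2}, {0, 3, 4}, {0, 5, 6}, {1, 3, 5}, {1, 4, 6}, {2, 3, 6}, {2, 4, 5}}

/-- The 3-fan (sail) `F`. -/
def fanHG : Set (Finset (Fin 7)) := {{0, 1, 2}, {0, 3, 4}, {0, 5, 6}, {2, 4, 6}}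

end Paper

namespace Paper

/-- `rs n`: the maximum number of edges of a Ruzsa–Szemerédi hypergraph on `n` vertices. -/
noncomputable def rs (n : ℕ) : ℕ :=
  sSup {k : ℕ | ∃ E : Finset (Finset (Fin n)), IsRS (E : Set (Finset (Fin n))) ∧ E.card = k}

end Paper

namespace SimpleGraph

open Finset Fintype

variable {α : Type*} [Fintype α] [DecidableEq α] {G : SimpleGraph α} [DecidableRel G.Adj]

lemma EdgeDisjointTriangles.card_cliqueFinset_le_sq (hG : G.EdgeDisjointTriangles) :
    #(G.cliqueFinset 3) ≤ card α ^ 2 :=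
  calc #(G.cliqueFinset 3) ≤ 3 * #(G.cliqueFinset 3) := Nat.le_mul_of_pos_left _ (by norm_num)
    _ ≤ #G.edgeFinset := hG.card_edgeFinset_le
    _ ≤ (card α).choose 2 := card_edgeFinset_le_card_choose_two
    _ ≤ card α ^ 2 := Nat.choose_le_pow _ _

lemma EdgeDisjointTriangles.card_cliqueFinset_lt (hG : G.EdgeDisjointTriangles) {ε : ℝ}
    (hε : 0 < ε) (hα : (triangleRemovalBound ε)⁻¹ < card α) :
    #(G.cliqueFinset 3) < ε * card α ^ 2 := by
  by_contra! hmany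
  have hδ := triangleRemovalBound_pos hε
  have hcube := (hG.farFromTriangleFree (by exact_mod_cast hmany)).le_card_cliqueFinset
  have hsq : (#(G.cliqueFinset 3) : ℝ) ≤ card α ^ 2 := by
    exact_mod_cast hG.card_cliqueFinset_le_sq
  rw [inv_lt_iff_one_lt_mul₀ hδ] at hα
  have hα₀ : (0 : ℝ) < card α :=
    lt_of_mul_lt_mul_right (by simpa using zero_lt_one.trans hα) hδ.le
  have : (card α : ℝ) ^ 2 < card α ^ 2 := calc
    (card α : ℝ) ^ 2 < card α * triangleRemovalBound ε * card α ^ 2 := by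
      nlinarith [pow_pos hα₀ 2]
    _ = triangleRemovalBound ε * card α ^ 3 := by ring
    _ ≤ card α ^ 2 := hcube.trans hsq
  exact this.false

end SimpleGraph

open SimpleGraph in
theorem tendsto_ruzsaSzemerediNumberNat_div_sq :
    Tendsto (fun n : ℕ => (ruzsaSzemerediNumberNat n : ℝ) / n ^ 2) atTop (nhds 0) := by
  refine tendsto_order.2 ⟨fun a ha => Eventually.of_forall fun n => ha.trans_le (by positivity),
    fun ε hε => ?_⟩
  obtain ⟨N, hN⟩ := exists_nat_gt (triangleRemovalBound ε)⁻¹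
  filter_upwards [eventually_gt_atTop N] with n hn
  obtain ⟨G, _, hcard, hG⟩ := ruzsaSzemerediNumber_spec (α := Fin n)
  have hlt := hG.edgeDisjointTriangles.card_cliqueFinset_lt hε
    (by simpa using hN.trans (Nat.cast_lt.2 hn))
  have hn₀ : (0 : ℝ) < n := by exact_mod_cast N.zero_le.trans_lt hn
  rw [div_lt_iff₀ (by positivity), ruzsaSzemerediNumberNat, ← hcard]
  simpa using hlt

namespace Paper

variable {V : Type*}

def shadowGraph (E : Set (Finset V)) : SimpleGraph V where
  Adj u v := u ≠ v ∧ ∃ e ∈ E, u ∈ e ∧ v ∈ e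
  symm := ⟨fun _ _ ⟨h, e, he, hu, hv⟩ => ⟨h.symm, e, he, hv, hu⟩⟩
  loopless := ⟨fun _ h => h.1 rfl⟩

@[simp]
lemma shadowGraph_adj {E : Set (Finset V)} {u v : V} :
    (shadowGraph E).Adj u v ↔ u ≠ v ∧ ∃ e ∈ E, u ∈ e ∧ v ∈ e :=
  Iff.rfl

variable [DecidableEq V]

lemma exists_eq_triple_of_card_eq_three {e : Finset V} (he : e.card = 3) {a b : V}
    (ha : a ∈ e) (hb : b ∈ e) (hab : a ≠ b) : ∃ x, e = {a, b, x} := by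
  have hb' : b ∈ e.erase a := Finset.mem_erase.2 ⟨hab.symm, hb⟩
  obtain ⟨x, hx⟩ := Finset.card_eq_one.1 (by
    rw [Finset.card_erase_of_mem hb', Finset.card_erase_of_mem ha, he] :
    ((e.erase a).erase b).card = 1)
  exact ⟨x, by rw [← Finset.insert_erase ha, ← Finset.insert_erase hb', hx]⟩

section Fintype

variable [Fintype V] {E : Set (Finset V)}

lemma IsRS.ncard_le_two_of_card_le_six (hE : IsRS E) (hV : 6 ≤ Fintype.card V)
    {S : Finset V} (hS : S.card ≤ 6) : {e ∈ E | e ⊆ S}.ncard ≤ 2 := by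
  obtain ⟨T, hST, -, hT⟩ := Finset.exists_subsuperset_card_eq S.subset_univ hS (by simpa)
  refine le_trans (Set.ncard_le_ncard ?_ ?_) (hE.2 T hT)
  · exact fun e ⟨he, heS⟩ => ⟨he, heS.trans hST⟩
  · exact T.powerset.finite_toSet.subset fun e he => Finset.mem_powerset.2 he.2

/-- If the three sides of a triangle of the shadow were covered by three different edges, these
edges would span at most `3 + 3 = 6` vertices: the triangle and one extra vertex per edge. -/
lemma IsRS.exists_mem_of_adj (hE : IsRS E) (hV : 6 ≤ Fintype.card V) {a b c : V}
    (hab : (shadowGraph E).Adj a b) (hbc : (shadowGraph E).Adj b c)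
    (hac : (shadowGraph E).Adj a c) : ∃ e ∈ E, a ∈ e ∧ b ∈ e ∧ c ∈ e := by
  obtain ⟨hab, e₁, he₁, ha₁, hb₁⟩ := shadowGraph_adj.1 hab
  obtain ⟨hbc, e₂, he₂, hb₂, hc₂⟩ := shadowGraph_adj.1 hbc
  obtain ⟨hac, e₃, he₃, ha₃, hc₃⟩ := shadowGraph_adj.1 hac
  by_contra! hnone
  have hc₁ : c ∉ e₁ := hnone e₁ he₁ ha₁ hb₁
  have ha₂ : a ∉ e₂ := fun h => hnone e₂ he₂ h hb₂ hc₂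
  obtain ⟨x, rfl⟩ := exists_eq_triple_of_card_eq_three (hE.1.1 _ he₁) ha₁ hb₁ hab
  obtain ⟨y, rfl⟩ := exists_eq_triple_of_card_eq_three (hE.1.1 _ he₂) hb₂ hc₂ hbc
  obtain ⟨z, rfl⟩ := exists_eq_triple_of_card_eq_three (hE.1.1 _ he₃) ha₃ hc₃ hac
  have hthree : ({{a, b, x}, {b, c, y}, {a, c, z}} : Set (Finset V)).ncard = 3 := by
    refine Set.ncard_eq_three.2 ⟨_, _, _, fun h => ?_, fun h => ?_, fun h => ?_, rfl⟩
    · exact hc₁ (h ▸ hc₂)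
    · exact hc₁ (h ▸ hc₃)
    · exact ha₂ (h ▸ ha₃)
  have hsub : ({{a, b, x}, {b, c, y}, {a, c, z}} : Set (Finset V)) ⊆
      {e ∈ E | e ⊆ ({a, b, c, x, y, z} : Finset V)} := by
    rintro e (rfl | rfl | rfl) <;> refine ⟨by assumption, ?_⟩ <;>
      intro v hv <;> simp only [Finset.mem_insert, Finset.mem_singleton] at hv ⊢ <;> tauto
  have := (Set.ncard_le_ncard hsub ((Set.toFinite _).subset fun e he => he.1)).trans
    (hE.ncard_le_two_of_card_le_six hV Finset.card_le_six)
  omega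

lemma IsRS.cliqueSet_shadowGraph (hE : IsRS E) (hV : 6 ≤ Fintype.card V) :
    (shadowGraph E).cliqueSet 3 = E := by
  ext t
  rw [SimpleGraph.mem_cliqueSet_iff, SimpleGraph.is3Clique_iff]
  constructor
  · rintro ⟨a, b, c, hab, hac, hbc, rfl⟩
    obtain ⟨e, he, ha, hb, hc⟩ := hE.exists_mem_of_adj hV hab hbc hac
    have hsub : ({a, b, c} : Finset V) ⊆ e := by simp [Finset.insert_subset_iff, ha, hb, hc]
    have hcard : e.card ≤ ({a, b, c} : Finset V).card := by
      rw [hE.1.1 e he, Finset.card_eq_three.2 ⟨a, b, c, hab.ne, hac.ne, hbc.ne, rfl⟩]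
    rwa [Finset.eq_of_subset_of_card_le hsub hcard]
  · intro he
    obtain ⟨a, b, c, hab, hac, hbc, rfl⟩ := Finset.card_eq_three.1 (hE.1.1 t he)
    refine ⟨a, b, c, shadowGraph_adj.2 ⟨hab, _, he, ?_, ?_⟩, shadowGraph_adj.2 ⟨hac, _, he, ?_, ?_⟩,
      shadowGraph_adj.2 ⟨hbc, _, he, ?_, ?_⟩, rfl⟩ <;> simp

lemma IsRS.locallyLinear_shadowGraph (hE : IsRS E) (hV : 6 ≤ Fintype.card V) :
    (shadowGraph E).LocallyLinear := by
  refine ⟨?_, fun u v huv => ?_⟩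
  · rw [SimpleGraph.EdgeDisjointTriangles, hE.cliqueSet_shadowGraph hV]
    intro e he f hf hef
    rw [← Finset.coe_inter]
    exact Finset.card_le_one.1 (hE.1.2 e he f hf hef)
  · obtain ⟨-, e, he, hu, hv⟩ := shadowGraph_adj.1 huv
    rw [← hE.cliqueSet_shadowGraph hV] at he
    exact ⟨e, he, hu, hv⟩

end Fintype

lemma rs_le_ruzsaSzemerediNumberNat {n : ℕ} (hn : 6 ≤ n) : rs n ≤ ruzsaSzemerediNumberNat n := by
  classical
  refine csSup_le' ?_
  rintro _ ⟨E, hE, rfl⟩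
  have hV : 6 ≤ Fintype.card (Fin n) := by simpa
  have hcliques : (shadowGraph (E : Set (Finset (Fin n)))).cliqueFinset 3 = E :=
    Finset.coe_injective (by rw [SimpleGraph.coe_cliqueFinset, hE.cliqueSet_shadowGraph hV])
  simpa [hcliques, ruzsaSzemerediNumberNat] using
    (hE.locallyLinear_shadowGraph hV).le_ruzsaSzemerediNumber

/-- **Ruzsa–Szemerédi (6,3)-theorem.** `rs(n) = o(n²)`. -/
theorem ruzsa_szemeredi :
    Tendsto (fun n : ℕ => (rs n : ℝ) / (n : ℝ) ^ 2) atTop (nhds 0) := by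
  refine squeeze_zero' (Eventually.of_forall fun n => by positivity) ?_
    tendsto_ruzsaSzemerediNumberNat_div_sq
  filter_upwards [eventually_ge_atTop 6] with n hn
  gcongr
  exact_mod_cast rs_le_ruzsaSzemerediNumberNat hn

end Paper
end

section
/- The number of Ruzsa–Szemerédi hypergraphs on vertex set Fin n is 2^{o(n²)}: if N(n) denotes the number of families E of 3-element subsets of Fin n that form a Ruzsa–Szemerédi hypergraph, then log₂(N(n))/n² → 0 as n → ∞. -/
open Filter

/-!
An RS hypergraph is the set of triangles of its shadow graph, and that shadow is locally linear
(every edge lies in exactly one triangle). By the triangle removal lemma a locally linear graph on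
`n` vertices has `o(n²)` edges, so an RS hypergraph is encoded by a set of `o(n²)` pairs of
vertices, and there are only `2^{o(n²)}` such sets.
-/

open Finset SimpleGraph

lemma Finset.pow_mul_card_powerset_filter_card_le {ι : Type*} (U : Finset ι) (K : ℕ) {x : ℝ}
    (hx₀ : 0 ≤ x) (hx₁ : x ≤ 1) :
    x ^ K * #{s ∈ U.powerset | #s ≤ K} ≤ (1 + x) ^ #U :=
  calc x ^ K * #{s ∈ U.powerset | #s ≤ K}
      = ∑ s ∈ U.powerset with #s ≤ K, x ^ K := by rw [sum_const, nsmul_eq_mul, mul_comm]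
    _ ≤ ∑ s ∈ U.powerset with #s ≤ K, x ^ #s :=
      sum_le_sum fun s hs ↦ pow_le_pow_of_le_one hx₀ hx₁ (mem_filter.1 hs).2
    _ ≤ ∑ s ∈ U.powerset, x ^ #s :=
      sum_le_sum_of_subset_of_nonneg (filter_subset _ _) fun _ _ _ ↦ pow_nonneg hx₀ _
    _ = (1 + x) ^ #U := by
      rw [add_comm, ← sum_pow_mul_eq_add_pow]
      simp

lemma Sym2.card_le_sq {α : Type*} [Fintype α] : Fintype.card (Sym2 α) ≤ Fintype.card α ^ 2 := by
  rw [Sym2.card, Nat.choose_two_right]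
  exact Nat.div_le_of_le_mul (by rw [Nat.add_sub_cancel]; nlinarith)

namespace SimpleGraph

/-- If a locally linear graph had more than `ε n²` triangles, it would be `ε`-far from
triangle-free, so by triangle removal it would have `δ n³ > n²` triangles, where
`δ = triangleRemovalBound ε`. -/
lemma LocallyLinear.card_cliqueFinset_le {α : Type*} [Fintype α] [DecidableEq α]
    {G : SimpleGraph α} [DecidableRel G.Adj] (hG : G.LocallyLinear) {ε : ℝ} (hε : 0 < ε)
    (hα : (triangleRemovalBound ε)⁻¹ < Fintype.card α) :
    #(G.cliqueFinset 3) ≤ ε * Fintype.card α ^ 2 := by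
  set n := Fintype.card α
  have hδ := triangleRemovalBound_pos hε
  have hδn : 1 < n * triangleRemovalBound ε := (inv_lt_iff_one_lt_mul₀ hδ).1 hα
  have hn : (0 : ℝ) < n := (inv_pos.2 hδ).trans hα
  have hT : (#(G.cliqueFinset 3) : ℝ) ≤ n ^ 2 := by
    have h3 : #(G.cliqueFinset 3) ≤ #G.edgeFinset := by
      rw [hG.card_edgeFinset]; omega
    exact_mod_cast h3.trans (card_edgeFinset_le_card_choose_two.trans (Nat.choose_le_pow n 2))
  by_contra! hbig
  have hremove := (hG.edgeDisjointTriangles.farFromTriangleFree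
    (by exact_mod_cast hbig.le)).le_card_cliqueFinset
  nlinarith [mul_lt_mul_of_pos_right hδn (pow_pos hn 2)]

end SimpleGraph

namespace Paper

section Shadow

variable {V : Type*} [DecidableEq V] {E : Set (Finset V)}

def shadow (E : Set (Finset V)) : SimpleGraph V where
  Adj x y := x ≠ y ∧ ∃ e ∈ E, x ∈ e ∧ y ∈ e

lemma isNClique_shadow_of_mem (h3 : ∀ e ∈ E, #e = 3) {e : Finset V} (he : e ∈ E) :
    (shadow E).IsNClique 3 e := by
  obtain ⟨x, y, z, hxy, hxz, hyz, rfl⟩ := card_eq_three.1 (h3 e he)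
  rw [is3Clique_triple_iff]
  exact ⟨⟨hxy, _, he, by simp, by simp⟩, ⟨hxz, _, he, by simp, by simp⟩,
    ⟨hyz, _, he, by simp, by simp⟩⟩

lemma card_union_union_eq_six {e₁ e₂ e₃ : Finset V} (h₁ : #e₁ = 3) (h₂ : #e₂ = 3)
    (h₃ : #e₃ = 3) (h₁₂ : #(e₁ ∩ e₂) ≤ 1) (h₁₃ : #(e₁ ∩ e₃) ≤ 1) (h₂₃ : #(e₂ ∩ e₃) ≤ 1)
    {x y z : V} (hx : x ∈ e₁ ∩ e₂) (hy : y ∈ e₁ ∩ e₃) (hz : z ∈ e₂ ∩ e₃) (hyz : y ≠ z) :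
    #(e₁ ∪ e₂ ∪ e₃) = 6 := by
  have hx₁₂ : #(e₁ ∩ e₂) = 1 := le_antisymm h₁₂ (card_pos.2 ⟨x, hx⟩)
  have hyz₃ : #((e₁ ∪ e₂) ∩ e₃) = 2 := by
    refine le_antisymm ?_ ?_
    · rw [union_inter_distrib_right]
      exact (card_union_le _ _).trans (by omega)
    · rw [← card_pair hyz]
      refine card_le_card (insert_subset ?_ (singleton_subset_iff.2 ?_))
      · exact mem_inter.2 ⟨mem_union_left _ (mem_inter.1 hy).1, (mem_inter.1 hy).2⟩
      · exact mem_inter.2 ⟨mem_union_right _ (mem_inter.1 hz).1, (mem_inter.1 hz).2⟩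
  have := card_inter_add_card_union e₁ e₂
  have := card_inter_add_card_union (e₁ ∪ e₂) e₃
  omega

lemma cliqueSet_shadow (hE : IsRS E) : (shadow E).cliqueSet 3 = E := by
  refine subset_antisymm (fun s hs ↦ ?_) fun e he ↦ isNClique_shadow_of_mem hE.1.1 he
  have hcard := hs.2
  obtain ⟨x, y, z, ⟨hxy, e₁, he₁, hx₁, hy₁⟩, ⟨hxz, e₂, he₂, hx₂, hz₂⟩, ⟨hyz, e₃, he₃, hy₃, hz₃⟩,
    rfl⟩ := is3Clique_iff.1 hs
  have mem_of_triple_subset : ∀ e ∈ E, x ∈ e → y ∈ e → z ∈ e → ({x, y, z} : Finset V) ∈ E := by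
    intro e he hx hy hz
    have hsub : ({x, y, z} : Finset V) ⊆ e := by simp [insert_subset_iff, *]
    rwa [eq_of_subset_of_card_le hsub (by rw [hE.1.1 e he, hcard])]
  by_cases h₁₂ : e₁ = e₂
  · exact mem_of_triple_subset e₁ he₁ hx₁ hy₁ (h₁₂ ▸ hz₂)
  by_cases h₁₃ : e₁ = e₃
  · exact mem_of_triple_subset e₁ he₁ hx₁ hy₁ (h₁₃ ▸ hz₃)
  by_cases h₂₃ : e₂ = e₃
  · exact mem_of_triple_subset e₂ he₂ hx₂ (h₂₃ ▸ hy₃) hz₂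
  -- three distinct edges inside the six vertices `e₁ ∪ e₂ ∪ e₃` violate the RS condition
  exfalso
  have hlin := hE.1.2
  have hsix := card_union_union_eq_six (hE.1.1 e₁ he₁) (hE.1.1 e₂ he₂) (hE.1.1 e₃ he₃)
    (hlin e₁ he₁ e₂ he₂ h₁₂) (hlin e₁ he₁ e₃ he₃ h₁₃) (hlin e₂ he₂ e₃ he₃ h₂₃)
    (mem_inter.2 ⟨hx₁, hx₂⟩) (mem_inter.2 ⟨hy₁, hy₃⟩) (mem_inter.2 ⟨hz₂, hz₃⟩) hyz
  have hsub : ({e₁, e₂, e₃} : Set (Finset V)) ⊆ {e ∈ E | e ⊆ e₁ ∪ e₂ ∪ e₃} := by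
    rintro f (rfl | rfl | rfl)
    · exact ⟨he₁, subset_union_left.trans subset_union_left⟩
    · exact ⟨he₂, subset_union_right.trans subset_union_left⟩
    · exact ⟨he₃, subset_union_right⟩
  have := (Set.ncard_le_ncard hsub
    ((e₁ ∪ e₂ ∪ e₃).powerset.finite_toSet.subset fun e he ↦ mem_powerset.2 he.2)).trans
    (hE.2 _ hsix)
  rw [Set.ncard_eq_three.2 ⟨e₁, e₂, e₃, h₁₂, h₁₃, h₂₃, rfl⟩] at this
  omega

lemma locallyLinear_shadow (hE : IsRS E) : (shadow E).LocallyLinear := by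
  refine ⟨?_, fun x y ⟨_, e, he, hx, hy⟩ ↦ ⟨e, isNClique_shadow_of_mem hE.1.1 he, hx, hy⟩⟩
  rw [EdgeDisjointTriangles, cliqueSet_shadow hE]
  intro e he f hf hef
  simpa [Set.Subsingleton, card_le_one] using hE.1.2 e he f hf hef

lemma card_edgeFinset_shadow [Fintype V] [DecidableRel (shadow E).Adj] (hE : IsRS E) :
    #(shadow E).edgeFinset = 3 * E.ncard := by
  rw [(locallyLinear_shadow hE).card_edgeFinset, ← Set.ncard_coe_finset, coe_cliqueFinset,
    cliqueSet_shadow hE]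

end Shadow

section Counting

variable {V : Type*} [Fintype V] [DecidableEq V]

lemma IsRS.ncard_le {E : Set (Finset V)} (hE : IsRS E) {ε : ℝ} (hε : 0 < ε)
    (hV : (triangleRemovalBound ε)⁻¹ < Fintype.card V) :
    E.ncard ≤ ε * Fintype.card V ^ 2 := by
  classical
  rw [← cliqueSet_shadow hE, ← coe_cliqueFinset, Set.ncard_coe_finset]
  exact (locallyLinear_shadow hE).card_cliqueFinset_le hε hV

lemma one_le_ncard_isRS : 1 ≤ {E : Set (Finset V) | IsRS E}.ncard := by
  have hempty : IsRS (∅ : Set (Finset V)) := ⟨by simp [Linear3], by simp⟩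
  exact (Set.ncard_pos (Set.toFinite _)).2 ⟨∅, hempty⟩

/-- An RS hypergraph is determined by its shadow, which has three times as many edges. -/
lemma pow_mul_ncard_isRS_le {x : ℝ} (hx₀ : 0 ≤ x) (hx₁ : x ≤ 1) {K : ℕ}
    (hK : ∀ E : Set (Finset V), IsRS E → 3 * E.ncard ≤ K) :
    x ^ K * {E : Set (Finset V) | IsRS E}.ncard ≤ (1 + x) ^ Fintype.card (Sym2 V) := by
  classical
  have hcount :
      {E : Set (Finset V) | IsRS E}.ncard ≤ #{s ∈ (univ : Finset (Sym2 V)).powerset | #s ≤ K} := by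
    rw [← Set.ncard_coe_finset]
    refine Set.ncard_le_ncard_of_injOn (fun E ↦ (shadow E).edgeFinset) (fun E hE ↦ ?_)
      (fun E hE F hF hEF ↦ ?_)
    · simpa [card_edgeFinset_shadow hE] using hK E hE
    · rw [← cliqueSet_shadow hE, ← cliqueSet_shadow hF, edgeFinset_inj.1 hEF]
  calc x ^ K * {E : Set (Finset V) | IsRS E}.ncard
      ≤ x ^ K * #{s ∈ (univ : Finset (Sym2 V)).powerset | #s ≤ K} := by gcongr
    _ ≤ (1 + x) ^ Fintype.card (Sym2 V) := univ.pow_mul_card_powerset_filter_card_le K hx₀ hx₁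

/-- Taking `ε = s²` in the edge bound and `x = s` in the subset count balances the two
factors `(1 + s)^(n²) ≤ e^(s n²)` and `s^(-3 s² n²) ≤ e^(3 s n²)`. -/
lemma log_ncard_isRS_le {s : ℝ} (hs₀ : 0 < s) (hs₁ : s ≤ 1)
    (hV : (triangleRemovalBound (s ^ 2))⁻¹ < Fintype.card V) :
    Real.log {E : Set (Finset V) | IsRS E}.ncard ≤ 4 * s * Fintype.card V ^ 2 := by
  have hP : (Fintype.card (Sym2 V) : ℝ) ≤ (Fintype.card V : ℝ) ^ 2 := by
    exact_mod_cast Sym2.card_le_sq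
  set N := {E : Set (Finset V) | IsRS E}.ncard
  set n : ℝ := (Fintype.card V : ℝ)
  set K := ⌊3 * s ^ 2 * n ^ 2⌋₊
  have hKn : (K : ℝ) ≤ 3 * s ^ 2 * n ^ 2 := Nat.floor_le (by positivity)
  have hK : ∀ E : Set (Finset V), IsRS E → 3 * E.ncard ≤ K := fun E hE ↦
    Nat.le_floor (by push_cast; linarith [hE.ncard_le (pow_pos hs₀ 2) hV])
  have hN : (0 : ℝ) < N := by exact_mod_cast one_le_ncard_isRS
  have hlog := Real.log_le_log (by positivity) (pow_mul_ncard_isRS_le hs₀.le hs₁ hK)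
  rw [Real.log_mul (by positivity) hN.ne', Real.log_pow, Real.log_pow] at hlog
  have hlog_add : Real.log (1 + s) ≤ s := by
    linarith [Real.log_le_sub_one_of_pos (by linarith : 0 < 1 + s)]
  have hlog_inv : -Real.log s ≤ s⁻¹ := by
    linarith [Real.log_inv s ▸ Real.log_le_sub_one_of_pos (inv_pos.2 hs₀)]
  have hP_log : Fintype.card (Sym2 V) * Real.log (1 + s) ≤ n ^ 2 * s :=
    mul_le_mul hP hlog_add (Real.log_nonneg (by linarith)) (by positivity)
  have hK_log : K * -Real.log s ≤ 3 * s ^ 2 * n ^ 2 * s⁻¹ :=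
    mul_le_mul hKn hlog_inv (by linarith [Real.log_nonpos hs₀.le hs₁]) (by positivity)
  have : 3 * s ^ 2 * n ^ 2 * s⁻¹ = 3 * s * n ^ 2 := by field_simp
  linarith

end Counting

/-- The number of Ruzsa–Szemerédi hypergraphs on vertex set `Fin n` is `2^{o(n²)}`. -/
theorem count_ruzsa_szemeredi_hypergraphs :
    Tendsto
      (fun n : ℕ =>
        Real.logb 2 (Set.ncard {E : Set (Finset (Fin n)) | IsRS E}) / (n : ℝ) ^ 2)
      atTop (nhds 0) := by
  refine tendsto_order.2 ⟨fun a ha ↦ Eventually.of_forall fun n ↦ ha.trans_le ?_, fun δ hδ ↦ ?_⟩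
  · exact div_nonneg (Real.logb_nonneg one_lt_two (by exact_mod_cast one_le_ncard_isRS))
      (sq_nonneg _)
  set s := min 1 (δ * Real.log 2 / 8)
  have hs₀ : 0 < s := lt_min one_pos (by positivity)
  have hsδ : s ≤ δ * Real.log 2 / 8 := min_le_right _ _
  filter_upwards [tendsto_natCast_atTop_atTop.eventually_gt_atTop
    (triangleRemovalBound (s ^ 2))⁻¹] with n hn
  have hn₀ : (0 : ℝ) < n := (inv_pos.2 (triangleRemovalBound_pos (by positivity))).trans hn
  have hlog := log_ncard_isRS_le (V := Fin n) hs₀ (min_le_left _ _) (by simpa using hn)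
  rw [Fintype.card_fin] at hlog
  rw [Real.logb, div_div, div_lt_iff₀ (by positivity)]
  nlinarith [Real.log_pos one_lt_two, pow_pos hn₀ 2]

end Paper
end
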